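/- arXiv:2107.05259 — 3 statements merged into one kernel-verified Lean document; each statement's English description precedes it below -/
import Mathlib

section
/- The set of real solutions (x_1,...,x_12, r) to the cube's magic labelling system {x1+x2+x9=r, x1+x3+x10=r, x2+x4+x12=r, x3+x4+x11=r, x5+x6+x9=r, x5+x7+x10=r, x6+x8+x12=r, x7+x8+x11=r} is a linear subspace of R^13 of dimension 6. -/
/-- The set of real solutions (x₁,…,x₁₂,r) ∈ ℝ¹³ of the cube's magic labelling
linear system. Coordinates 0–11 are the edge labels and coordinate 12 is r. -/
def cubeSolutions : Set (Fin 13 → ℝ) :=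
  {v | v 0 + v 1 + v 8 = v 12 ∧ v 0 + v 2 + v 9 = v 12 ∧
       v 1 + v 3 + v 11 = v 12 ∧ v 2 + v 3 + v 10 = v 12 ∧
       v 4 + v 5 + v 8 = v 12 ∧ v 4 + v 6 + v 9 = v 12 ∧
       v 5 + v 7 + v 11 = v 12 ∧ v 6 + v 7 + v 10 = v 12}

/-!
The labels x₄, x₅, x₆, x₇, x₈ and the magic sum r can be chosen freely: the vertex equations
through x₅, x₆, x₇, x₈ give x₉, x₁₀, x₁₁, x₁₂, the remaining ones then give x₃, x₁, x₂ in turn, and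
the last equation x₂ + x₄ + x₁₂ = r holds automatically. So the solution set is the image of an
injective linear map ℝ⁶ → ℝ¹³, whose left inverse reads off the six free coordinates.
-/

def cubeFreeCoords : (Fin 13 → ℝ) →ₗ[ℝ] (Fin 6 → ℝ) :=
  LinearMap.funLeft ℝ ℝ ![3, 4, 5, 6, 7, 12]

def cubeParam : (Fin 6 → ℝ) →ₗ[ℝ] (Fin 13 → ℝ) where
  toFun p := ![p 0 + p 1 - p 4, p 2 + p 4 - p 0, p 3 + p 4 - p 0, p 0, p 1, p 2, p 3, p 4,
    p 5 - p 1 - p 2, p 5 - p 1 - p 3, p 5 - p 3 - p 4, p 5 - p 2 - p 4, p 5]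
  map_add' p q := by ext i; fin_cases i <;> simp <;> ring
  map_smul' c p := by ext i; fin_cases i <;> simp <;> ring

theorem cubeParam_mem_cubeSolutions (p : Fin 6 → ℝ) : cubeParam p ∈ cubeSolutions := by
  refine ⟨?_, ?_, ?_, ?_, ?_, ?_, ?_, ?_⟩ <;> simp [cubeParam] <;> ring

theorem cubeFreeCoords_cubeParam : Function.LeftInverse cubeFreeCoords cubeParam := by
  intro p
  ext i
  fin_cases i <;> rfl

theorem cubeParam_cubeFreeCoords {v : Fin 13 → ℝ} (hv : v ∈ cubeSolutions) :
    cubeParam (cubeFreeCoords v) = v := by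
  obtain ⟨h₁, h₂, -, h₄, h₅, h₆, h₇, h₈⟩ := hv
  ext i
  fin_cases i <;> simp [cubeParam, cubeFreeCoords] <;> linarith

theorem range_cubeParam : Set.range cubeParam = cubeSolutions :=
  Set.Subset.antisymm (Set.range_subset_iff.2 cubeParam_mem_cubeSolutions)
    fun _ hv => ⟨_, cubeParam_cubeFreeCoords hv⟩

theorem cubeSolutions_is_subspace_dim_six :
    ∃ W : Submodule ℝ (Fin 13 → ℝ), (W : Set (Fin 13 → ℝ)) = cubeSolutions ∧
      Module.finrank ℝ W = 6 := by
  refine ⟨LinearMap.range cubeParam, by rw [LinearMap.coe_range, range_cubeParam], ?_⟩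
  rw [LinearMap.finrank_range_of_inj cubeFreeCoords_cubeParam.injective, Module.finrank_fin_fun]
end

section
/- Let α = q1α1 + ... + q6α6 with q_i ∈ R. Then α ∈ N^12 if and only if all of the following are nonnegative integers: q1, q2, q3, q6; q1+q4, q2+q4, q3+q4, q6+q4; q1+q3+q5, q1+q5+q6, q2+q3+q5, q2+q5+q6. -/
def a1 : Fin 12 → ℝ := ![0,1,1,0,1,0,0,1,0,0,0,0]
def a2 : Fin 12 → ℝ := ![1,0,0,1,0,1,1,0,0,0,0,0]
def a3 : Fin 12 → ℝ := ![1,0,0,0,1,0,0,0,0,0,1,1]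
def a4 : Fin 12 → ℝ := ![0,1,0,0,0,1,0,0,0,1,1,0]
def a5 : Fin 12 → ℝ := ![1,0,0,1,1,0,0,1,0,0,0,0]
def a6 : Fin 12 → ℝ := ![0,0,0,1,0,0,0,1,1,1,0,0]

/-- `x` is a nonnegative integer. -/
def IsNatNum (x : ℝ) : Prop := ∃ n : ℕ, x = (n : ℝ)

theorem combo_eq_vec (q1 q2 q3 q4 q5 q6 : ℝ) :
    q1 • a1 + q2 • a2 + q3 • a3 + q4 • a4 + q5 • a5 + q6 • a6 =
      ![q2+q3+q5, q1+q4, q1, q2+q5+q6, q1+q3+q5, q2+q4, q2, q1+q5+q6, q6, q6+q4, q3+q4, q3] := by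
  ext i
  fin_cases i <;> simp [a1, a2, a3, a4, a5, a6, add_comm q4 q6]

theorem combo_in_nat_iff (q1 q2 q3 q4 q5 q6 : ℝ) :
    (∀ i, IsNatNum ((q1 • a1 + q2 • a2 + q3 • a3 + q4 • a4 + q5 • a5 + q6 • a6) i)) ↔
      (IsNatNum q1 ∧ IsNatNum q2 ∧ IsNatNum q3 ∧ IsNatNum q6) ∧
      (IsNatNum (q1+q4) ∧ IsNatNum (q2+q4) ∧ IsNatNum (q3+q4) ∧ IsNatNum (q6+q4)) ∧
      (IsNatNum (q1+q3+q5) ∧ IsNatNum (q1+q5+q6) ∧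
        IsNatNum (q2+q3+q5) ∧ IsNatNum (q2+q5+q6)) := by
  rw [combo_eq_vec]
  simp only [Fin.forall_fin_succ, Matrix.cons_val_zero, Matrix.cons_val_succ, IsEmpty.forall_iff]
  tauto
end

section
/- The number of magic labellings of the cube with magic sum r equals the coefficient of y^r in (1+3y+3y^2+y^3)/(1−y)^6; equivalently it is a polynomial in r of degree 5. -/
/-!
A magic labelling is determined by the labels `a, d` and `b, c` of the two pairs of opposite edges
of the face `x0 x1 x3 x2` together with `e = x5`, subject to `max a d + max b c ≤ r` and
`b - c ≤ e ≤ b + min a d`; so `(a, d, b, c)` extends in `min a d + min b c + 1` ways. As `2m + 1`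
pairs have maximum `m` and their minima add up to `m²`, summing over the pairs gives
`magicCount r = ∑_{i + j ≤ r} ((2i + 1) j² + (i + 1)² (2j + 1))`, i.e. `G = (F·Q + U·F) / (1 - y)`
with `F = ∑ (2m + 1) yᵐ = (1 + y) / (1 - y)²`, `U = ∑ (m + 1)² yᵐ = (1 + y) / (1 - y)³` and
`Q = ∑ m² yᵐ = y·U`. Hence `G = (1 + y)³ / (1 - y)⁶`, and expanding `1 / (1 - y)⁶` gives
`magicCount r = C(r+5, 5) + 3 C(r+4, 5) + 3 C(r+3, 5) + C(r+2, 5) = (r+1)(r+2)(2r+3)(r²+3r+5)/30`.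
-/

def IsMagic (x : Fin 12 → ℕ) (r : ℕ) : Prop :=
  x 0 + x 1 + x 8 = r ∧ x 0 + x 2 + x 9 = r ∧
  x 1 + x 3 + x 11 = r ∧ x 2 + x 3 + x 10 = r ∧
  x 4 + x 5 + x 8 = r ∧ x 4 + x 6 + x 9 = r ∧
  x 5 + x 7 + x 11 = r ∧ x 6 + x 7 + x 10 = r

/-- The number of magic labellings of the cube with magic sum `r`. -/
noncomputable def magicCount (r : ℕ) : ℕ := Nat.card {x : Fin 12 → ℕ // IsMagic x r}

/-- The generating function `G(y) = Σ_r magicCount r · y^r`. -/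
noncomputable def G : PowerSeries ℚ := PowerSeries.mk fun r => (magicCount r : ℚ)

open PowerSeries
open Finset hiding mk

theorem sum_range_product_max_mul_min {R : Type*} [CommSemiring R] (ψ : ℕ → R) (α β : R) (n : ℕ) :
    ∑ p ∈ range n ×ˢ range n, ψ (max p.1 p.2) * (α * min p.1 p.2 + β) =
      ∑ m ∈ range n, ψ m * (α * m ^ 2 + β * (2 * m + 1)) := by
  have shell (m : ℕ) :
      2 * ∑ k ∈ range m, (α * k + β) + (α * m + β) = α * m ^ 2 + β * (2 * m + 1) := by
    induction m with
    | zero => simp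
    | succ m ih =>
      calc 2 * ∑ k ∈ range (m + 1), (α * k + β) + (α * ↑(m + 1) + β)
          = (2 * ∑ k ∈ range m, (α * k + β) + (α * m + β)) + (α * m + β) +
              (α * (m + 1) + β) := by
            rw [sum_range_succ]; push_cast; ring
        _ = α * ↑(m + 1) ^ 2 + β * (2 * ↑(m + 1) + 1) := by rw [ih]; push_cast; ring
  induction n with
  | zero => simp
  | succ n ih =>
    have row (a : ℕ) (ha : a < n) : ∑ d ∈ range (n + 1), ψ (max a d) * (α * min a d + β) =
        ∑ d ∈ range n, ψ (max a d) * (α * min a d + β) + ψ n * (α * a + β) := by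
      rw [sum_range_succ, max_eq_right ha.le, min_eq_left ha.le]
    have last : ∑ d ∈ range (n + 1), ψ (max n d) * (α * min n d + β) =
        ∑ d ∈ range n, ψ n * (α * d + β) + ψ n * (α * n + β) := by
      rw [sum_range_succ, max_self, min_self]
      congr 1
      exact sum_congr rfl fun d hd => by
        rw [max_eq_left (mem_range.1 hd).le, min_eq_right (mem_range.1 hd).le]
    rw [sum_product] at ih ⊢
    rw [sum_range_succ, sum_congr rfl fun a ha => row a (mem_range.1 ha), sum_add_distrib, ih,
      last, sum_range_succ, ← shell, ← mul_sum]
    ring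

namespace PowerSeries

variable {R : Type*}

theorem coeff_mul_mk_one [Semiring R] (φ : R⟦X⟧) (n : ℕ) :
    coeff n (φ * mk 1) = ∑ j ∈ range (n + 1), coeff j φ := by
  simp only [coeff_mul, coeff_mk, Pi.one_apply, mul_one]
  exact Nat.sum_antidiagonal_eq_sum_range_succ (fun j _ => coeff j φ) n

theorem coeff_mul_mul_mk_one [CommSemiring R] (φ ψ : R⟦X⟧) (n : ℕ) :
    coeff n (φ * ψ * mk 1) = ∑ i ∈ range (n + 1), ∑ j ∈ range (n + 1),
      if i + j ≤ n then coeff i φ * coeff j ψ else 0 := by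
  rw [mul_assoc, coeff_mul,
    Nat.sum_antidiagonal_eq_sum_range_succ (fun i k => coeff i φ * coeff k (ψ * mk 1))]
  refine sum_congr rfl fun i hi => ?_
  rw [coeff_mul_mk_one, mul_sum, ← sum_filter]
  congr 1
  ext j
  simp only [mem_filter, mem_range] at hi ⊢
  omega

theorem mk_two_mul_add_one_mul_one_sub_X_sq [CommRing R] :
    (mk fun n => (2 * n + 1 : R)) * (1 - X) ^ 2 = 1 + X := by
  have h : (mk fun n => (2 * n + 1 : R)) * (1 - X) = (1 + X) * mk 1 := by
    ext (_ | n)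
    · simp
    · simp only [mul_sub, add_mul, one_mul, mul_one, map_add, map_sub, coeff_mk, Pi.one_apply,
        coeff_succ_mul_X, coeff_succ_X_mul, Nat.cast_add, Nat.cast_one]
      ring
  rw [sq, ← mul_assoc, h, mul_assoc, mk_one_mul_one_sub_eq_one, mul_one]

theorem mk_add_one_sq_mul_one_sub_X_pow_three [CommRing R] :
    (mk fun n => ((n + 1) ^ 2 : R)) * (1 - X) ^ 3 = 1 + X := by
  have h : (mk fun n => ((n + 1) ^ 2 : R)) * (1 - X) = mk fun n => (2 * n + 1 : R) := by
    ext (_ | n)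
    · simp
    · simp only [mul_sub, mul_one, map_sub, coeff_mk, coeff_succ_mul_X, Nat.cast_add, Nat.cast_one]
      ring
  rw [pow_succ', ← mul_assoc, h, mk_two_mul_add_one_mul_one_sub_X_sq]

theorem mk_sq_eq_X_mul [CommRing R] :
    (mk fun n => (n ^ 2 : R)) = X * mk fun n => ((n + 1) ^ 2 : R) := by
  ext (_ | n) <;> simp [coeff_succ_X_mul]

theorem coeff_X_pow_mul_mk_choose [Semiring R] {k d : ℕ} (hk : k ≤ d) (n : ℕ) :
    coeff n (X ^ k * mk fun m => ((d + m).choose d : R)) = ((n + d - k).choose d : R) := by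
  rw [coeff_X_pow_mul', coeff_mk]
  split_ifs with h
  · congr 2
    omega
  · rw [Nat.choose_eq_zero_of_lt (by omega), Nat.cast_zero]

end PowerSeries

theorem Nat.cast_choose_five (n : ℕ) :
    (n.choose 5 : ℚ) = n * (n - 1) * (n - 2) * (n - 3) * (n - 4) / 120 := by
  rw [Nat.cast_choose_eq_descPochhammer_div]
  simp [descPochhammer_succ_right, Nat.factorial]

/-- `((b, c), (a, d), e)` stands for the labels `x1, x2, x0, x3, x5`. -/
def magicParams (r : ℕ) : Finset ((ℕ × ℕ) × (ℕ × ℕ) × ℕ) :=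
  ((range (r + 1) ×ˢ range (r + 1)) ×ˢ (range (r + 1) ×ˢ range (r + 1)) ×ˢ range (r + 1)).filter
    fun ⟨(b, c), (a, d), e⟩ => max a d + max b c ≤ r ∧ b ≤ c + e ∧ e ≤ a + b ∧ e ≤ b + d

def magicLabelling (r : ℕ) : (ℕ × ℕ) × (ℕ × ℕ) × ℕ → Fin 12 → ℕ
  | ⟨(b, c), (a, d), e⟩ =>
    ![a, b, c, d, a + b - e, e, c + e - b, b + d - e, r - a - b, r - a - c, r - c - d, r - b - d]

theorem mem_magicParams {r a b c d e : ℕ} :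
    ((b, c), (a, d), e) ∈ magicParams r ↔
      max a d + max b c ≤ r ∧ b ≤ c + e ∧ e ≤ a + b ∧ e ≤ b + d := by
  simp only [magicParams, mem_filter, mem_product, mem_range]
  omega

theorem mem_magicParams_of_isMagic {r : ℕ} {x : Fin 12 → ℕ} (hx : IsMagic x r) :
    ((x 1, x 2), (x 0, x 3), x 5) ∈ magicParams r := by
  obtain ⟨h1, h2, h3, h4, h5, h6, h7, h8⟩ := hx
  rw [mem_magicParams]
  omega

theorem isMagic_magicLabelling {r : ℕ} {v : (ℕ × ℕ) × (ℕ × ℕ) × ℕ} (hv : v ∈ magicParams r) :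
    IsMagic (magicLabelling r v) r := by
  obtain ⟨⟨b, c⟩, ⟨a, d⟩, e⟩ := v
  rw [mem_magicParams] at hv
  simp only [IsMagic, magicLabelling, Matrix.cons_val_zero, Matrix.cons_val_one, Matrix.cons_val]
  omega

theorem magicLabelling_params {r : ℕ} {x : Fin 12 → ℕ} (hx : IsMagic x r) :
    magicLabelling r ((x 1, x 2), (x 0, x 3), x 5) = x := by
  obtain ⟨h1, h2, h3, h4, h5, h6, h7, h8⟩ := hx
  ext i
  fin_cases i <;> simp [magicLabelling] <;> omega

def magicEquiv (r : ℕ) : {x : Fin 12 → ℕ // IsMagic x r} ≃ magicParams r where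
  toFun x := ⟨((x.1 1, x.1 2), (x.1 0, x.1 3), x.1 5), mem_magicParams_of_isMagic x.2⟩
  invFun v := ⟨magicLabelling r v, isMagic_magicLabelling v.2⟩
  left_inv x := Subtype.ext (magicLabelling_params x.2)
  right_inv := by
    rintro ⟨⟨⟨b, c⟩, ⟨a, d⟩, e⟩, hv⟩
    simp [magicLabelling]

theorem card_filter_range_eq_min_add_min_add_one {r a b c d : ℕ} (h : a + b ≤ r) :
    #{e ∈ range (r + 1) | b ≤ c + e ∧ e ≤ a + b ∧ e ≤ b + d} = min a d + min b c + 1 := by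
  have : {e ∈ range (r + 1) | b ≤ c + e ∧ e ≤ a + b ∧ e ≤ b + d} =
      Icc (b - c) (b + min a d) := by
    ext e
    simp only [mem_filter, mem_range, mem_Icc]
    omega
  rw [this, Nat.card_Icc]
  omega

theorem card_magicParams (r : ℕ) :
    #(magicParams r) =
      ∑ q ∈ range (r + 1) ×ˢ range (r + 1), ∑ p ∈ range (r + 1) ×ˢ range (r + 1),
        if max p.1 p.2 + max q.1 q.2 ≤ r then min p.1 p.2 + min q.1 q.2 + 1 else 0 := by
  rw [magicParams, card_filter, sum_product]
  refine sum_congr rfl fun ⟨b, c⟩ _ => ?_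
  rw [sum_product]
  refine sum_congr rfl fun ⟨a, d⟩ _ => ?_
  dsimp only
  split_ifs with h
  · rw [← card_filter, ← card_filter_range_eq_min_add_min_add_one (show a + b ≤ r by omega)]
    congr 1
    ext e
    simp only [mem_filter, h, true_and]
  · exact sum_eq_zero fun e _ => if_neg fun h' => h h'.1

theorem magicCount_eq_sum (r : ℕ) :
    magicCount r = ∑ i ∈ range (r + 1), ∑ j ∈ range (r + 1),
      if i + j ≤ r then (2 * i + 1) * j ^ 2 + (i + 1) ^ 2 * (2 * j + 1) else 0 := by
  rw [magicCount, Nat.card_congr (magicEquiv r), Nat.card_eq_finsetCard, card_magicParams]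
  set B := range (r + 1) ×ˢ range (r + 1)
  calc _ = ∑ q ∈ B, ∑ p ∈ B, (if max p.1 p.2 + max q.1 q.2 ≤ r then 1 else 0) *
          (1 * min p.1 p.2 + (min q.1 q.2 + 1)) := by
        refine sum_congr rfl fun q _ => sum_congr rfl fun p _ => ?_
        split_ifs <;> ring
    _ = ∑ q ∈ B, ∑ i ∈ range (r + 1), (if i + max q.1 q.2 ≤ r then 1 else 0) *
        (1 * i ^ 2 + (min q.1 q.2 + 1) * (2 * i + 1)) :=
      sum_congr rfl fun q _ =>
        sum_range_product_max_mul_min (fun m => if m + max q.1 q.2 ≤ r then 1 else 0) _ _ _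
    _ = ∑ i ∈ range (r + 1), ∑ q ∈ B, (if max q.1 q.2 + i ≤ r then 1 else 0) *
        ((2 * i + 1) * min q.1 q.2 + (i + 1) ^ 2) := by
      rw [sum_comm]
      refine sum_congr rfl fun i _ => sum_congr rfl fun q _ => ?_
      rw [add_comm (max _ _)]
      ring
    _ = ∑ i ∈ range (r + 1), ∑ j ∈ range (r + 1), (if j + i ≤ r then 1 else 0) *
        ((2 * i + 1) * j ^ 2 + (i + 1) ^ 2 * (2 * j + 1)) :=
      sum_congr rfl fun i _ =>
        sum_range_product_max_mul_min (fun m => if m + i ≤ r then 1 else 0) _ _ _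
    _ = _ := by
      refine sum_congr rfl fun i _ => sum_congr rfl fun j _ => ?_
      rw [add_comm j]
      split_ifs <;> ring

theorem G_eq_mul_mk_one : G = ((mk fun n => (2 * n + 1 : ℚ)) * (mk fun n => (n ^ 2 : ℚ)) +
    (mk fun n => ((n + 1) ^ 2 : ℚ)) * (mk fun n => (2 * n + 1 : ℚ))) * mk 1 := by
  ext r
  rw [G, coeff_mk, magicCount_eq_sum, add_mul, map_add, coeff_mul_mul_mk_one,
    coeff_mul_mul_mk_one, ← sum_add_distrib]
  push_cast
  refine sum_congr rfl fun i _ => ?_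
  rw [← sum_add_distrib]
  refine sum_congr rfl fun j _ => ?_
  split_ifs <;> simp

theorem G_mul_one_sub_X_pow_six : G * (1 - X) ^ 6 = (1 + X) ^ 3 := by
  rw [G_eq_mul_mk_one, mk_sq_eq_X_mul]
  calc _ = (1 + X) * ((mk fun n => (2 * n + 1 : ℚ)) * (1 - X) ^ 2) *
        ((mk fun n => ((n + 1) ^ 2 : ℚ)) * (1 - X) ^ 3) * (mk 1 * (1 - X)) := by ring
    _ = (1 + X) ^ 3 := by
      rw [mk_two_mul_add_one_mul_one_sub_X_sq, mk_add_one_sq_mul_one_sub_X_pow_three,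
        mk_one_mul_one_sub_eq_one]
      ring

theorem G_eq_mul_mk_choose : G = (1 + X) ^ 3 * mk fun n => ((5 + n).choose 5 : ℚ) := by
  rw [← G_mul_one_sub_X_pow_six, mul_assoc, mul_comm ((1 - X) ^ 6),
    mk_add_choose_mul_one_sub_pow_eq_one ℚ 5, mul_one]

theorem cast_magicCount (r : ℕ) :
    (magicCount r : ℚ) = (r + 1) * (r + 2) * (2 * r + 3) * (r ^ 2 + 3 * r + 5) / 30 := by
  set S : ℚ⟦X⟧ := mk fun n => ((5 + n).choose 5 : ℚ) with hS
  have h := congrArg (coeff r) G_eq_mul_mk_choose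
  rw [G, coeff_mk, show (1 + X) ^ 3 * S =
      X ^ 0 * S + 3 • (X ^ 1 * S) + 3 • (X ^ 2 * S) + X ^ 3 * S by ring] at h
  rw [hS, map_add, map_add, map_add, map_nsmul, map_nsmul,
    coeff_X_pow_mul_mk_choose (show 0 ≤ 5 by norm_num),
    coeff_X_pow_mul_mk_choose (show 1 ≤ 5 by norm_num),
    coeff_X_pow_mul_mk_choose (show 2 ≤ 5 by norm_num),
    coeff_X_pow_mul_mk_choose (show 3 ≤ 5 by norm_num)] at h
  rw [h, nsmul_eq_mul, nsmul_eq_mul]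
  push_cast [Nat.cast_choose_five]
  ring

theorem magic_count_generating_function :
    G * (1 - PowerSeries.X) ^ 6 =
      1 + 3 * PowerSeries.X + 3 * PowerSeries.X ^ 2 + PowerSeries.X ^ 3 ∧
    ∃ p : Polynomial ℚ, p.degree = 5 ∧ ∀ r : ℕ, (magicCount r : ℚ) = p.eval (r : ℚ) := by
  refine ⟨by rw [G_mul_one_sub_X_pow_six]; ring, ?_⟩
  refine ⟨Polynomial.C (1 / 30) * (Polynomial.X + 1) * (Polynomial.X + 2) *
    (2 * Polynomial.X + 3) * (Polynomial.X ^ 2 + 3 * Polynomial.X + 5), by compute_degree!,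
    fun r => ?_⟩
  rw [cast_magicCount]
  simp only [Polynomial.eval_mul, Polynomial.eval_add, Polynomial.eval_pow, Polynomial.eval_C,
    Polynomial.eval_X, Polynomial.eval_ofNat, Polynomial.eval_one]
  ring
end
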